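/- Let x_1, …, x_8 be complex roots of unity, none equal to 1, none equal to −1, and such that no two of them sum to 0 (x_i + x_j ≠ 0 for all i ≠ j). If x_1 + ⋯ + x_8 = 4, then the multiset {x_1, …, x_8} consists of four copies of ζ_6 and four copies of ζ_6⁵. -/

import Mathlib

/-- `zeta k = exp(2πi/k)`, the standard primitive `k`-th root of unity. -/
noncomputable def zeta (k : ℕ) : ℂ := Complex.exp (2 * Real.pi * Complex.I / k)

open Polynomial
lemma sum_nthRoots (n : ℕ) (hn : 0 < n) :
    ∑ z ∈ nthRootsFinset n (1:ℂ), z = if n = 1 then 1 else 0 := by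
  have hζ := Complex.isPrimitiveRoot_exp n hn.ne'
  set ζ := Complex.exp (2 * Real.pi * Complex.I / n) with hζdef
  have h1 : ∑ z ∈ nthRootsFinset n (1:ℂ), z = ((nthRoots n (1:ℂ)).map id).sum := by
    rw [nthRootsFinset_def, ← Multiset.toFinset_eq (hζ.nthRoots_one_nodup)]
    rfl
  rw [h1, hζ.nthRoots_eq (one_pow n), Multiset.map_map]
  have h2 : ((Multiset.range n).map (id ∘ fun i => ζ ^ i * 1)).sum
      = ∑ i ∈ Finset.range n, ζ ^ i := by
    simp [Finset.sum]
  rw [h2]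
  rcases eq_or_lt_of_le (Nat.one_le_iff_ne_zero.mpr hn.ne' : 1 ≤ n) with h | h
  · simp [← h]
  · rw [hζ.geom_sum_eq_zero h, if_neg (by omega)]

open ArithmeticFunction ArithmeticFunction.Moebius in
lemma sum_primroots (n : ℕ) (hn : 0 < n) :
    ∑ z ∈ primitiveRoots n ℂ, z = (μ n : ℂ) := by
  have H : ∀ m > 0, ∑ d ∈ Nat.divisors m, (∑ z ∈ primitiveRoots d ℂ, z)
      = (fun k => if k = 1 then (1:ℂ) else 0) m := by
    intro m hm
    simp only
    have hζ := Complex.isPrimitiveRoot_exp m hm.ne'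
    rw [← sum_nthRoots m hm, IsPrimitiveRoot.nthRoots_one_eq_biUnion_primitiveRoots (n := m),
      Finset.sum_biUnion]
    intro a ha b hb hab
    exact Finset.disjoint_coe.mp (by exact_mod_cast IsPrimitiveRoot.disjoint hab)
  have := (ArithmeticFunction.sum_eq_iff_sum_smul_moebius_eq
    (f := fun d => ∑ z ∈ primitiveRoots d ℂ, z)
    (g := fun k => if k = 1 then (1:ℂ) else 0)).mp H n hn
  rw [← this]
  rw [Finset.sum_eq_single (n, 1)]
  · simp
  · rintro ⟨d, e⟩ hde hne
    rw [Nat.mem_divisorsAntidiagonal] at hde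
    have : e ≠ 1 := by rintro rfl; exact hne (by simp [← hde.1])
    simp [this]
  · intro h
    exact absurd (Nat.mem_divisorsAntidiagonal.mpr ⟨(mul_one n).symm ▸ rfl, hn.ne'⟩) h

lemma fiber_sum {G H : Type*} [Group G] [Fintype G] [Group H] [Fintype H] [DecidableEq H]
    (π : G →* H) (hsurj : Function.Surjective π) (f : H → ℂ) :
    ∃ c : ℕ, c * Fintype.card H = Fintype.card G ∧
      ∑ g : G, f (π g) = (c : ℂ) * ∑ h : H, f h := by
  classical
  set c : ℕ := (Finset.univ.filter (fun g : G => π g = 1)).card with hc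
  have hcard : ∀ h : H, (Finset.univ.filter (fun g : G => π g = h)).card = c := by
    intro h
    have := MonoidHom.card_fiber_eq_of_mem_range π (hsurj h) ⟨1, map_one π⟩
    simpa using this
  have hsplit : ∑ g : G, f (π g)
      = ∑ h : H, ∑ g ∈ Finset.univ.filter (fun g : G => π g = h), f (π g) := by
    rw [Finset.sum_fiberwise_of_maps_to (fun g _ => Finset.mem_univ (π g))]
  refine ⟨c, ?_, ?_⟩
  · have : ∑ h : H, (Finset.univ.filter (fun g : G => π g = h)).card = Fintype.card G := by
      rw [← Finset.card_eq_sum_card_fiberwise (fun g _ => Finset.mem_univ (π g))]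
      rfl
    rw [← this, Finset.sum_congr rfl (fun h _ => hcard h), Finset.sum_const, smul_eq_mul,
      mul_comm, Finset.card_univ]
  · rw [hsplit]
    rw [Finset.mul_sum]
    refine Finset.sum_congr rfl fun h _ => ?_
    have : ∀ g ∈ Finset.univ.filter (fun g : G => π g = h), f (π g) = f h := by
      intro g hg
      rw [(Finset.mem_filter.mp hg).2]
    rw [Finset.sum_congr rfl this, Finset.sum_const, hcard h, nsmul_eq_mul]

set_option maxHeartbeats 1000000 in
open ArithmeticFunction ArithmeticFunction.Moebius in
lemma weight_sum {x : ℂ} {n N : ℕ} [NeZero n] [NeZero N] (hx : IsPrimitiveRoot x n)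
    (hnN : n ∣ N) :
    ∃ c : ℕ, c * Nat.totient n = Nat.totient N ∧
      ∑ k : (ZMod N)ˣ, x ^ ((k : ZMod N).val) = (c : ℂ) * (μ n : ℂ) := by
  classical
  have hn0 : 0 < n := Nat.pos_of_ne_zero (NeZero.ne n)
  set π := ZMod.unitsMap hnN with hπ
  have hdep : ∀ k : (ZMod N)ˣ, x ^ ((k : ZMod N).val) = x ^ (((π k : ZMod n)).val) := by
    intro k
    have h1 : ((π k : ZMod n)).val = (k : ZMod N).val % n := by
      rw [hπ, ZMod.unitsMap_def]
      simp only [Units.coe_map, MonoidHom.coe_coe, ZMod.castHom_apply]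
      rw [← ZMod.natCast_val, ZMod.val_natCast]
    rw [h1]
    conv_lhs => rw [← pow_mod_orderOf, ← hx.eq_orderOf]
  obtain ⟨c, hc1, hc2⟩ := fiber_sum π (ZMod.unitsMap_surjective hnN)
    (fun v : (ZMod n)ˣ => x ^ (v : ZMod n).val)
  refine ⟨c, ?_, ?_⟩
  · rwa [ZMod.card_units_eq_totient, ZMod.card_units_eq_totient] at hc1
  · rw [Finset.sum_congr rfl (fun k _ => hdep k), hc2]
    congr 1
    rw [← sum_primroots n hn0]
    refine Finset.sum_bij (fun (v : (ZMod n)ˣ) _ => x ^ (v : ZMod n).val) ?_ ?_ ?_ ?_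
    · intro v _
      rw [mem_primitiveRoots hn0]
      exact hx.pow_of_coprime _ (ZMod.val_coe_unit_coprime v)
    · intro v _ w _ hvw
      apply Units.ext
      have h1 := hx.pow_inj (ZMod.val_lt _) (ZMod.val_lt _) hvw
      have : (((v : ZMod n).val : ℕ) : ZMod n) = (((w : ZMod n).val : ℕ) : ZMod n) := by
        exact_mod_cast congrArg (Nat.cast : ℕ → ZMod n) h1
      rwa [ZMod.natCast_val, ZMod.natCast_val, ZMod.cast_id, ZMod.cast_id] at this
    · intro z hz
      rw [mem_primitiveRoots hn0] at hz
      obtain ⟨i, hlt, hcop, hi⟩ := (hx.isPrimitiveRoot_iff).mp hz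
      refine ⟨ZMod.unitOfCoprime i hcop, Finset.mem_univ _, ?_⟩
      simp only [ZMod.coe_unitOfCoprime]
      rw [ZMod.val_natCast, Nat.mod_eq_of_lt hlt]
      exact hi
    · intro v _; rfl

open ArithmeticFunction ArithmeticFunction.Moebius in
lemma totient_two_of_moebius_one {n : ℕ} (h2 : 2 ≤ n) (hμ : μ n = 1) (hφ : Nat.totient n = 2) :
    n = 6 := by
  have hsq : Squarefree n := by
    by_contra hs
    rw [ArithmeticFunction.moebius_eq_zero_of_not_squarefree hs] at hμ; norm_num at hμ
  have hdvd : n ∣ 6 := by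
    have hprod := Nat.prod_primeFactors_of_squarefree hsq
    have hsub : n.primeFactors ⊆ ({2, 3} : Finset ℕ) := by
      intro p hp
      have hpp := Nat.prime_of_mem_primeFactors hp
      have hpn := Nat.dvd_of_mem_primeFactors hp
      have hple : p - 1 ∣ 2 := by
        have := Nat.totient_dvd_of_dvd hpn
        rw [hφ, Nat.totient_prime hpp] at this
        exact this
      have hp2 := hpp.two_le
      have hp3 : p ≤ 3 := by have := Nat.le_of_dvd (by norm_num) hple; omega
      interval_cases p <;> simp
    calc n = ∏ p ∈ n.primeFactors, p := hprod.symm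
    _ ∣ ∏ p ∈ ({2,3} : Finset ℕ), p := Finset.prod_dvd_prod_of_subset _ _ _ hsub
    _ = 6 := by decide
  have hn6 : n ≤ 6 := Nat.le_of_dvd (by norm_num) hdvd
  interval_cases n <;> first
    | rfl
    | (exfalso; revert hdvd hφ; decide)
    | (rw [ArithmeticFunction.moebius_apply_prime (by norm_num)] at hμ; omega)

open ArithmeticFunction ArithmeticFunction.Moebius in
lemma key_ineq {n c T : ℕ} (hn : 2 ≤ n) (hc : c * Nat.totient n = T) (hT : 0 < T) :
    2 * ((c : ℤ) * μ n) ≤ (T : ℤ) ∧ (2 * ((c : ℤ) * μ n) = (T : ℤ) → n = 6) := by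
  have hTZ : (0:ℤ) < (T:ℤ) := by exact_mod_cast hT
  have hcZ : (c:ℤ) * (Nat.totient n : ℤ) = (T:ℤ) := by exact_mod_cast hc
  have hc0 : (0:ℤ) < (c:ℤ) := by
    rcases Nat.eq_zero_or_pos c with rfl | h
    · simp at hcZ; omega
    · exact_mod_cast h
  rcases moebius_eq_or n with h0 | h1 | hm1
  · rw [h0]
    refine ⟨by nlinarith, fun h => absurd h (by nlinarith)⟩
  · rw [h1]
    have hφ2 : 2 ≤ Nat.totient n := by
      rcases Nat.lt_or_ge n 3 with h | h
      · interval_cases n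
        · exfalso
          rw [moebius_apply_prime (by norm_num)] at h1; omega
      · have he := Nat.totient_even (by omega : 2 < n)
        have hp := Nat.totient_pos.mpr (by omega : 0 < n)
        rcases he with ⟨k, hk⟩
        omega
    have hφ2Z : (2:ℤ) ≤ (Nat.totient n : ℤ) := by exact_mod_cast hφ2
    constructor
    · nlinarith
    · intro he
      have hφeq : Nat.totient n = 2 := by
        have : (Nat.totient n : ℤ) = 2 := by nlinarith
        exact_mod_cast this
      exact totient_two_of_moebius_one hn h1 hφeq
  · rw [hm1]
    constructor
    · nlinarith
    · intro h; exfalso; nlinarith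

open Polynomial in
theorem stmt11 (x : Fin 8 → ℂ)
    (hroot : ∀ i, ∃ m : ℕ, 1 ≤ m ∧ x i ^ m = 1)
    (hne1 : ∀ i, x i ≠ 1)
    (hnem1 : ∀ i, x i ≠ -1)
    (hpair : ∀ i j, i ≠ j → x i + x j ≠ 0)
    (hsum : ∑ i, x i = 4) :
    Finset.univ.val.map x =
      Multiset.replicate 4 (zeta 6) + Multiset.replicate 4 (zeta 6 ^ 5) := by
  classical
  have hfin : ∀ i, IsOfFinOrder (x i) := fun i => by
    obtain ⟨m, hm1, hm⟩ := hroot i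
    exact isOfFinOrder_iff_pow_eq_one.mpr ⟨m, by omega, hm⟩
  set n : Fin 8 → ℕ := fun i => orderOf (x i) with hndef
  have hprim : ∀ i, IsPrimitiveRoot (x i) (n i) := fun i => IsPrimitiveRoot.orderOf (x i)
  have hn0 : ∀ i, 0 < n i := fun i => (hfin i).orderOf_pos
  have hn2 : ∀ i, 2 ≤ n i := by
    intro i
    have h1 : n i ≠ 1 := fun h => hne1 i (orderOf_eq_one_iff.mp h)
    have := hn0 i; omega
  set N : ℕ := ∏ i, n i with hNdef
  have hdvd : ∀ i, n i ∣ N := fun i => Finset.dvd_prod_of_mem _ (Finset.mem_univ i)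
  have hN0 : 0 < N := Finset.prod_pos (fun i _ => hn0 i)
  haveI : NeZero N := ⟨hN0.ne'⟩
  have hzN := Complex.isPrimitiveRoot_exp N hN0.ne'
  set zN : ℂ := Complex.exp (2 * Real.pi * Complex.I / N) with hzNdef
  have hxN : ∀ i, x i ^ N = 1 := fun i =>
    orderOf_dvd_iff_pow_eq_one.mp (hdvd i)
  have hpow : ∀ i, ∃ a : ℕ, zN ^ a = x i := by
    intro i
    obtain ⟨a, _, ha⟩ := hzN.eq_pow_of_pow_eq_one (hxN i)
    exact ⟨a, ha⟩
  choose a ha using hpow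
  -- Galois step
  have key : ∀ e : ℕ, e.Coprime N → ∑ i, x i ^ e = 4 := by
    intro e hcop
    set P : ℚ[X] := (∑ i, X ^ (a i)) - C 4 with hPdef
    have haeval : ∀ z : ℂ, (aeval z) P = (∑ i, z ^ (a i)) - 4 := by
      intro z
      simp [hPdef]
    have hP0 : (aeval zN) P = 0 := by
      rw [haeval]
      have : ∑ i, zN ^ (a i) = ∑ i, x i := Finset.sum_congr rfl (fun i _ => ha i)
      rw [this, hsum]; ring
    have hmin : minpoly ℚ zN ∣ P := minpoly.dvd ℚ zN hP0
    have hcyc : cyclotomic N ℚ = minpoly ℚ zN := cyclotomic_eq_minpoly_rat hzN hN0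
    haveI : NeZero ((N : ℕ) : ℂ) := ⟨by exact_mod_cast hN0.ne'⟩
    have hprim' : IsPrimitiveRoot (zN ^ e) N := hzN.pow_of_coprime e hcop
    have hroot' : (aeval (zN ^ e)) (cyclotomic N ℚ) = 0 := by
      have := (isRoot_cyclotomic_iff (n := N) (R := ℂ)).mpr hprim'
      rw [aeval_def, ← eval_map, map_cyclotomic]
      exact this
    have hPe : (aeval (zN ^ e)) P = 0 := by
      obtain ⟨q, hq⟩ := hmin
      rw [hq, map_mul, ← hcyc, hroot', zero_mul]
    rw [haeval, sub_eq_zero] at hPe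
    rw [← hPe]
    refine Finset.sum_congr rfl (fun i _ => ?_)
    rw [← ha i, ← pow_mul, mul_comm, pow_mul]
  -- sum over units
  haveI : ∀ i, NeZero (n i) := fun i => ⟨(hn0 i).ne'⟩
  have hws := fun i => weight_sum (hprim i) (hdvd i)
  choose c hc hw using hws
  have htot : ∑ k : (ZMod N)ˣ, ∑ i, x i ^ ((k : ZMod N).val) = (Nat.totient N : ℂ) * 4 := by
    rw [Finset.sum_congr rfl (fun k _ => key _ (ZMod.val_coe_unit_coprime k)),
      Finset.sum_const, Finset.card_univ, ZMod.card_units_eq_totient, nsmul_eq_mul]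
  rw [Finset.sum_comm] at htot
  have htot2 : ∑ i, (c i : ℂ) * ((ArithmeticFunction.moebius (n i)) : ℂ) = (Nat.totient N : ℂ) * 4 := by
    rw [← htot]
    exact (Finset.sum_congr rfl (fun i _ => (hw i).symm))
  have hZ : ∑ i, (c i : ℤ) * ((ArithmeticFunction.moebius (n i))) = (Nat.totient N : ℤ) * 4 := by
    have : ((∑ i, (c i : ℤ) * ((ArithmeticFunction.moebius (n i))) : ℤ) : ℂ) = (((Nat.totient N : ℤ) * 4 : ℤ) : ℂ) := by
      push_cast
      exact htot2
    exact_mod_cast this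
  have hT0 : 0 < Nat.totient N := Nat.totient_pos.mpr hN0
  have hki := fun i => key_ineq (hn2 i) (hc i) hT0
  have hall : ∀ i, n i = 6 := by
    by_contra hcon
    push_neg at hcon
    obtain ⟨i0, hi0⟩ := hcon
    have hstrict : 2 * ((c i0 : ℤ) * ArithmeticFunction.moebius (n i0)) < (Nat.totient N : ℤ) :=
      lt_of_le_of_ne (hki i0).1 (fun h => hi0 ((hki i0).2 h))
    have hsumlt : ∑ i, 2 * ((c i : ℤ) * (ArithmeticFunction.moebius (n i))) < ∑ _i : Fin 8, (Nat.totient N : ℤ) :=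
      Finset.sum_lt_sum (fun i _ => (hki i).1) ⟨i0, Finset.mem_univ i0, hstrict⟩
    rw [← Finset.mul_sum, hZ] at hsumlt
    simp at hsumlt
    omega
  -- every x i is a primitive 6th root of unity
  have hprim6 : ∀ i, IsPrimitiveRoot (x i) 6 := fun i => (hall i) ▸ hprim i
  have h6 : IsPrimitiveRoot (zeta 6) 6 := by
    have h := Complex.isPrimitiveRoot_exp 6 (by norm_num)
    rw [zeta]
    exact_mod_cast h
  have hz6 : zeta 6 ^ 6 = 1 := h6.pow_eq_one
  have hz3 : zeta 6 ^ 3 = -1 := by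
    have h2 : (zeta 6 ^ 3) * (zeta 6 ^ 3) = 1 := by rw [← pow_add]; exact hz6
    rcases mul_self_eq_one_iff.mp h2 with h | h
    · exact absurd h (h6.pow_ne_one_of_pos_of_lt (by norm_num) (by norm_num))
    · exact h
  have hw3 : IsPrimitiveRoot (zeta 6 ^ 2) 3 := by
    have := h6.pow_of_dvd (by norm_num : (2:ℕ) ≠ 0) (by norm_num : 2 ∣ 6)
    norm_num at this
    exact this
  have hg3 : 1 + zeta 6 ^ 2 + (zeta 6 ^ 2) ^ 2 = 0 := by
    have := hw3.geom_sum_eq_zero (by norm_num)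
    rw [Finset.sum_range_succ, Finset.sum_range_succ, Finset.sum_range_succ,
      Finset.sum_range_zero] at this
    rw [← this]; ring
  have hE2 : zeta 6 + zeta 6 ^ 5 = 1 := by
    linear_combination zeta 6 * hg3 - hz3
  have hzne : zeta 6 ≠ zeta 6 ^ 5 := by
    intro h
    have h2 : zeta 6 ^ 2 = 1 := by
      calc zeta 6 ^ 2 = zeta 6 ^ 5 * zeta 6 := by rw [← h]; ring
      _ = zeta 6 ^ 6 := by ring
      _ = 1 := hz6
    exact h6.pow_ne_one_of_pos_of_lt (by norm_num) (by norm_num) h2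
  have hmem : ∀ i, x i = zeta 6 ∨ x i = zeta 6 ^ 5 := by
    intro i
    obtain ⟨j, hj6, hcop, hji⟩ := (h6.isPrimitiveRoot_iff).mp (hprim6 i)
    interval_cases j
    · exact absurd hcop (by decide)
    · left; rw [← hji, pow_one]

    · exact absurd hcop (by decide)
    · exact absurd hcop (by decide)
    · exact absurd hcop (by decide)
    · right; exact hji.symm
  -- counting
  set s : Finset (Fin 8) := Finset.univ.filter (fun i => x i = zeta 6) with hs
  have hnots : ∀ i, i ∉ s → x i = zeta 6 ^ 5 := by
    intro i hi
    refine (hmem i).resolve_left ?_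
    simpa [hs] using hi
  have hcards : s.card ≤ 8 := by
    rw [hs]
    exact (Finset.card_filter_le _ _).trans (by simp)
  have hE1 : (s.card : ℂ) * zeta 6 + (8 - (s.card : ℂ)) * zeta 6 ^ 5 = 4 := by
    have hsplit := Finset.sum_filter_add_sum_filter_not Finset.univ
      (fun i => x i = zeta 6) x
    rw [hsum] at hsplit
    have h1 : ∑ i ∈ s, x i = (s.card : ℂ) * zeta 6 := by
      rw [Finset.sum_congr rfl (fun i hi => (Finset.mem_filter.mp hi).2),
        Finset.sum_const, nsmul_eq_mul]
    have h2 : ∑ i ∈ Finset.univ.filter (fun i => ¬ x i = zeta 6), x i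
        = (8 - (s.card : ℂ)) * zeta 6 ^ 5 := by
      rw [Finset.sum_congr rfl (fun i hi => hnots i (by
        intro hins
        exact (Finset.mem_filter.mp hi).2 (Finset.mem_filter.mp hins).2)),
        Finset.sum_const, nsmul_eq_mul]
      congr 1
      rw [Finset.filter_not, Finset.card_sdiff_of_subset (Finset.filter_subset _ _), ← hs,
        Finset.card_univ, Fintype.card_fin, Nat.cast_sub hcards]
      norm_num
    rw [h1, h2] at hsplit
    exact hsplit
  have hcard4 : s.card = 4 := by
    have hfac : ((s.card : ℂ) - 4) * (zeta 6 - zeta 6 ^ 5) = 0 := by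
      linear_combination hE1 - 4 * hE2
    rcases mul_eq_zero.mp hfac with h | h
    · have : (s.card : ℂ) = 4 := by linear_combination h
      exact_mod_cast this
    · exact absurd (by linear_combination h : zeta 6 = zeta 6 ^ 5) hzne
  -- multiset conclusion
  have hcards5 : (Finset.univ.filter (fun i => x i = zeta 6 ^ 5)).card = 4 := by
    have : Finset.univ.filter (fun i => x i = zeta 6 ^ 5)
        = Finset.univ.filter (fun i => ¬ x i = zeta 6) := by
      ext i
      simp only [Finset.mem_filter, Finset.mem_univ, true_and]
      constructor
      · intro h h'
        exact hzne (h'.symm.trans h)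
      · intro h
        exact (hmem i).resolve_left h
    rw [this, Finset.filter_not, Finset.card_sdiff_of_subset (Finset.filter_subset _ _)]
    rw [← hs, hcard4]
    simp
  have hfilter : ∀ b : ℂ, Multiset.count b (Multiset.map x Finset.univ.val)
      = (Finset.univ.filter (fun i => x i = b)).card := by
    intro b
    rw [Multiset.count_map]
    have h1 : Multiset.filter (fun a => b = x a) Finset.univ.val
        = (Finset.univ.filter (fun a => b = x a)).val := (Finset.filter_val _ _).symm
    rw [h1, ← Finset.card_def]
    congr 1
    ext i
    simp [eq_comm]
  refine Multiset.ext.mpr (fun b => ?_)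
  rw [Multiset.count_add, Multiset.count_replicate, Multiset.count_replicate, hfilter b]
  by_cases hb1 : b = zeta 6
  · subst hb1
    rw [if_pos rfl, if_neg (fun h => hzne h.symm), ← hs, hcard4]
  · by_cases hb5 : b = zeta 6 ^ 5
    · subst hb5
      rw [if_neg hzne, if_pos rfl, hcards5]
    · rw [if_neg (fun h => hb1 h.symm), if_neg (fun h => hb5 h.symm)]
      have : Finset.univ.filter (fun i => x i = b) = ∅ := by
        refine Finset.filter_eq_empty_iff.mpr (fun i _ => ?_)
        rcases hmem i with h | h
        · rw [h]; exact fun hh => hb1 hh.symm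
        · rw [h]; exact fun hh => hb5 hh.symm
      rw [this]
      simp
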